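/- arXiv:2004.12424 — 4 statements merged into one kernel-verified Lean document; each statement's English description precedes it below -/
import Mathlib

section
/- (Vertex filtering correctness) Let f be a monotone increasing score function on ℝ^d, and let τ = min over x of f(w(p^x_{s,e})) where p^x_{s,e} is a shortest path from v_s to v_e under the x-th cost. If a vertex v_i satisfies τ < f(Φ_{s,i} + Φ_{i,e}), where Φ_{s,i} and Φ_{i,e} are the componentwise single-cost shortest distance vectors, then no optimal path (a path minimizing f of its cost vector) from v_s to v_e passes through v_i. -/
/-- A multi-cost network: a directed graph where every edge carries a
nonnegative cost vector in `ℝ^d`. -/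
structure MCN (V : Type) (d : ℕ) where
  E : V → V → Prop
  w : V → V → (Fin d → ℝ)
  w_nonneg : ∀ u v : V, ∀ i : Fin d, 0 ≤ w u v i

namespace MCN

variable {V : Type} {d : ℕ}

/-- The cost vector of a path (given as its list of vertices):
the componentwise sum of the cost vectors of its edges. -/
def pathCost (G : MCN V d) : List V → (Fin d → ℝ)
  | a :: b :: rest => G.w a b + pathCost G (b :: rest)
  | _ => 0

/-- `p` is a path from `s` to `t` in `G`. -/
def IsPath (G : MCN V d) (s t : V) (p : List V) : Prop :=
  p.head? = some s ∧ p.getLast? = some t ∧ p.Chain' G.E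

/-- `u` dominates `v`: componentwise `≤` and not equal. -/
def Dominates (u v : Fin d → ℝ) : Prop := u ≤ v ∧ u ≠ v

/-- A monotone increasing score function. -/
def Mono (f : (Fin d → ℝ) → ℝ) : Prop :=
  ∀ u v : Fin d → ℝ, u ≤ v → u ≠ v → f u < f v

/-- `φ^x_{s,t}` : the shortest-path distance from `s` to `t` using only the
`x`-th cost component. -/
noncomputable def phi (G : MCN V d) (s t : V) (x : Fin d) : ℝ :=
  sInf {c : ℝ | ∃ p, G.IsPath s t p ∧ G.pathCost p x = c}

/-- The lower-bound vector `Φ_{s,t} = (φ^1_{s,t}, ..., φ^d_{s,t})`. -/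
noncomputable def Phi (G : MCN V d) (s t : V) : Fin d → ℝ :=
  fun x => G.phi s t x

end MCN

/-! An optimal path through `v_i` splits at `v_i` into a path `v_s → v_i` and a path
`v_i → v_e`, whose costs dominate `Φ_{s,i}` and `Φ_{i,e}` componentwise; by monotonicity its
score is at least `f(Φ_{s,i} + Φ_{i,e}) > τ`. But `τ` is the score of one of the single-cost
shortest paths from `v_s` to `v_e`, contradicting optimality. -/

namespace MCN

variable {V : Type} {d : ℕ}

theorem Mono.monotone {f : (Fin d → ℝ) → ℝ} (hf : Mono f) : Monotone f := fun u v huv =>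
  (eq_or_ne u v).elim (fun h => (congrArg f h).le) fun h => (hf u v huv h).le

theorem pathCost_nonneg (G : MCN V d) : ∀ (p : List V) (x : Fin d), 0 ≤ G.pathCost p x
  | [], _ | [_], _ => le_rfl
  | a :: b :: r, x => add_nonneg (G.w_nonneg a b x) (pathCost_nonneg G (b :: r) x)

theorem pathCost_append_cons (G : MCN V d) : ∀ (l₁ : List V) (v : V) (l₂ : List V),
    G.pathCost (l₁ ++ v :: l₂) = G.pathCost (l₁ ++ [v]) + G.pathCost (v :: l₂)
  | [], v, l₂ => by simp [pathCost]
  | [a], v, l₂ => by simp only [List.cons_append, List.nil_append, pathCost]; abel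
  | a :: b :: r, v, l₂ => by
    have ih := pathCost_append_cons G (b :: r) v l₂
    simp only [List.cons_append] at ih ⊢
    simp only [pathCost, ih]
    abel

theorem IsPath.append_cons {G : MCN V d} {s t v : V} {l₁ l₂ : List V}
    (hp : G.IsPath s t (l₁ ++ v :: l₂)) :
    G.IsPath s v (l₁ ++ [v]) ∧ G.IsPath v t (v :: l₂) := by
  obtain ⟨hhead, hlast, hchain⟩ := hp
  rw [List.Chain', List.isChain_split] at hchain
  refine ⟨⟨?_, List.getLast?_concat, hchain.1⟩, ⟨rfl, ?_, hchain.2⟩⟩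
  · cases l₁ <;> simpa using hhead
  · rwa [List.getLast?_append_cons] at hlast

theorem phi_le_pathCost {G : MCN V d} {s t : V} {p : List V} (hp : G.IsPath s t p)
    (x : Fin d) : G.phi s t x ≤ G.pathCost p x :=
  csInf_le ⟨0, fun _ ⟨q, _, hq⟩ => hq ▸ G.pathCost_nonneg q x⟩ ⟨p, hp, rfl⟩

theorem Phi_add_Phi_le_pathCost {G : MCN V d} {s t v : V} {p : List V}
    (hp : G.IsPath s t p) (hv : v ∈ p) : G.Phi s v + G.Phi v t ≤ G.pathCost p := by
  obtain ⟨l₁, l₂, rfl⟩ := List.append_of_mem hv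
  obtain ⟨hsv, hvt⟩ := hp.append_cons
  intro x
  rw [G.pathCost_append_cons]
  exact add_le_add (phi_le_pathCost hsv x) (phi_le_pathCost hvt x)

end MCN

theorem stmt_4_general {V : Type} {d : ℕ} (G : MCN V d)
    (f : (Fin d → ℝ) → ℝ) (hf : MCN.Mono f) (vs ve : V)
    (px : Fin d → List V)
    (hpx : ∀ x : Fin d, G.IsPath vs ve (px x) ∧ G.pathCost (px x) x = G.phi vs ve x)
    (τ : ℝ) (hτ : IsLeast {y : ℝ | ∃ x : Fin d, y = f (G.pathCost (px x))} τ)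
    (vi : V) (hfilter : τ < f (G.Phi vs vi + G.Phi vi ve)) :
    ∀ p : List V, G.IsPath vs ve p →
      (∀ q : List V, G.IsPath vs ve q → f (G.pathCost p) ≤ f (G.pathCost q)) →
      vi ∉ p := by
  intro p hp hopt hvi
  obtain ⟨x, rfl⟩ := hτ.1
  have hlower := hf.monotone (MCN.Phi_add_Phi_le_pathCost hp hvi)
  have hopt_x := hopt (px x) (hpx x).1
  linarith

/-- Vertex filtering correctness: with
`τ = min_x f(w(p^x_{s,e}))` over the single-cost shortest paths `p^x_{s,e}`,
if a vertex `v_i` satisfies `τ < f(Φ_{s,i} + Φ_{i,e})`, then no optimal path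
from `v_s` to `v_e` passes through `v_i`. -/
theorem stmt_4 {V : Type} {d : ℕ} [Fintype V] (G : MCN V d)
    (f : (Fin d → ℝ) → ℝ) (hf : MCN.Mono f) (vs ve : V)
    (px : Fin d → List V)
    (hpx : ∀ x : Fin d, G.IsPath vs ve (px x) ∧ G.pathCost (px x) x = G.phi vs ve x)
    (τ : ℝ) (hτ : IsLeast {y : ℝ | ∃ x : Fin d, y = f (G.pathCost (px x))} τ)
    (vi : V) (hfilter : τ < f (G.Phi vs vi + G.Phi vi ve)) :
    ∀ p : List V, G.IsPath vs ve p →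
      (∀ q : List V, G.IsPath vs ve q → f (G.pathCost p) ≤ f (G.pathCost q)) →
      vi ∉ p :=
  stmt_4_general G f hf vs ve px hpx τ hτ vi hfilter
end

section
/- Under the map p = (p_x, p_y) ↦ p' = (−p_x/√2 + p_y/2, p_x/√2 + p_y/2, −p_y/√2), for any two distinct points p'₁, p'₂ in the image, if the first coordinate of p'₁ exceeds that of p'₂ and the second coordinate of p'₁ exceeds that of p'₂, then the third coordinate of p'₁ is strictly less than that of p'₂. Consequently, no point in the image of a finite set under this map dominates another (every image point is a skyline point). -/
/-- The planar-to-3D map `p ↦ (−p_x/√2 + p_y/2, p_x/√2 + p_y/2, −p_y/√2)`. -/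
noncomputable def liftMap (p : Fin 2 → ℝ) : Fin 3 → ℝ :=
  ![-(p 0) / Real.sqrt 2 + (p 1) / 2,
    (p 0) / Real.sqrt 2 + (p 1) / 2,
    -(p 1) / Real.sqrt 2]

/-- for any two image points, if the first two coordinates of one
strictly exceed those of the other, then its third coordinate is strictly
smaller; consequently no image point dominates another (componentwise `≤` and
`≠`), i.e. every image point is a skyline point. -/
theorem stmt_11 :
    (∀ p q : Fin 2 → ℝ,
        liftMap q 0 < liftMap p 0 → liftMap q 1 < liftMap p 1 →
          liftMap p 2 < liftMap q 2) ∧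
    (∀ p q : Fin 2 → ℝ, ¬ (liftMap p ≤ liftMap q ∧ liftMap p ≠ liftMap q)) := by
  have hs : (0:ℝ) < Real.sqrt 2 := Real.sqrt_pos.mpr (by norm_num)
  constructor
  · intro p q h0 h1
    simp only [liftMap, Matrix.cons_val_zero, Matrix.cons_val_one, Matrix.head_cons,
      Matrix.cons_val_two, Matrix.tail_cons, neg_div] at h0 h1 ⊢
    have hqp : q 1 < p 1 := by linarith
    have : q 1 / Real.sqrt 2 < p 1 / Real.sqrt 2 := by gcongr
    linarith
  · rintro p q ⟨hle, hne⟩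
    have h0 := hle 0
    have h1 := hle 1
    have h2 := hle 2
    simp only [liftMap, Matrix.cons_val_zero, Matrix.cons_val_one, Matrix.head_cons,
      Matrix.cons_val_two, Matrix.tail_cons, neg_div] at h0 h1 h2
    have hb : p 1 = q 1 := by
      have hd : q 1 / Real.sqrt 2 ≤ p 1 / Real.sqrt 2 := by linarith
      have := (div_le_div_iff_of_pos_right hs).mp hd
      linarith
    have ha : p 0 = q 0 := by
      rw [hb] at h0 h1
      have h0' : q 0 / Real.sqrt 2 ≤ p 0 / Real.sqrt 2 := by linarith
      have h1' : p 0 / Real.sqrt 2 ≤ q 0 / Real.sqrt 2 := by linarith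
      have := (div_le_div_iff_of_pos_right hs).mp h0'
      have := (div_le_div_iff_of_pos_right hs).mp h1'
      linarith
    apply hne
    funext i
    fin_cases i <;> simp [liftMap, ha, hb]
end

section
/- (Greedy 2-approximation, Gonzalez-style) Let S be a finite set of points in a metric space and r ≥ 1. The farthest-point greedy partition into r groups (iteratively create a new group seeded by the point whose distance to its current group's base point is maximal, and move every point closer to the new base than to its own base into the new group) produces a partition 𝓡 with D(𝓡) ≤ 2 · D(𝓡*), where 𝓡* is the partition into r groups minimizing the maximum group diameter. -/
/-- Gonzalez-style greedy 2-approximation: let `S` be a finite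
point set in a metric space and `r ≥ 1`. Suppose the base points `b 0, ..., b (r-1)`
are chosen by the farthest-point greedy rule (when `b j` is created, its
distance to the previously created bases is maximal among all points of `S`),
and each point of `S` is assigned (`assign`) to a nearest base — this is the
partition produced by the greedy procedure. Then the maximum diameter of a
greedy group is at most twice the maximum group diameter of **any** partition
of `S` into `r` groups, in particular at most `2 · D(𝓡*)` for an optimal
partition `𝓡*`. -/
theorem stmt_13 {α : Type} [MetricSpace α] (S : Finset α) (hS : S.Nonempty)
    (r : ℕ) (hr : 1 ≤ r)
    (b : Fin r → α) (hb : ∀ j, b j ∈ S)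
    (assign : α → Fin r)
    (hnear : ∀ q ∈ S, ∀ i : Fin r, dist q (b (assign q)) ≤ dist q (b i))
    (hgreedy : ∀ j : Fin r, ∀ q ∈ S,
      sInf ((fun i => dist q (b i)) '' {i : Fin r | i < j}) ≤
        sInf ((fun i => dist (b j) (b i)) '' {i : Fin r | i < j}))
    (P : Fin r → Finset α) (hPsub : ∀ j, P j ⊆ S)
    (hPcover : ∀ q ∈ S, ∃ j, q ∈ P j)
    (hPdisj : ∀ i j : Fin r, i ≠ j → Disjoint (P i) (P j)) :
    (⨆ j : Fin r, Metric.diam (↑(S.filter fun q => assign q = j) : Set α)) ≤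
      2 * ⨆ j : Fin r, Metric.diam (↑(P j) : Set α) := by
  haveI : NeZero r := ⟨by omega⟩
  set D : ℝ := ⨆ j : Fin r, Metric.diam (↑(P j) : Set α) with hD
  have hbdd : BddAbove (Set.range fun j : Fin r => Metric.diam (↑(P j) : Set α)) :=
    (Set.finite_range _).bddAbove
  have hdiam_le : ∀ k : Fin r, Metric.diam (↑(P k) : Set α) ≤ D := fun k =>
    le_ciSup hbdd k
  have hDnn : 0 ≤ D := le_trans Metric.diam_nonneg (hdiam_le ⟨0, by omega⟩)
  -- key: every point of S is within D of its assigned base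
  have key : ∀ q ∈ S, dist q (b (assign q)) ≤ D := by
    intro q hq
    obtain ⟨c, hc⟩ := hPcover q hq
    by_cases hcase : ∃ i : Fin r, b i ∈ P c
    · obtain ⟨i, hi⟩ := hcase
      calc dist q (b (assign q)) ≤ dist q (b i) := hnear q hq i
        _ ≤ Metric.diam (↑(P c) : Set α) :=
          Metric.dist_le_diam_of_mem ((P c).finite_toSet.isBounded) hc hi
        _ ≤ D := hdiam_le c
    · push_neg at hcase
      -- pick group of each base
      choose k hk using fun i : Fin r => hPcover (b i) (hb i)
      have hkc : ∀ i, k i ≠ c := by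
        intro i h
        exact hcase i (h ▸ hk i)
      have hmaps : ∀ i ∈ (Finset.univ : Finset (Fin r)), k i ∈ Finset.univ.erase c := by
        intro i _
        exact Finset.mem_erase.mpr ⟨hkc i, Finset.mem_univ _⟩
      have hcard : (Finset.univ.erase c).card < (Finset.univ : Finset (Fin r)).card := by
        rw [Finset.card_erase_of_mem (Finset.mem_univ _)]
        simp only [Finset.card_univ, Fintype.card_fin]
        omega
      obtain ⟨i, -, j, -, hij, hkij⟩ :=
        Finset.exists_ne_map_eq_of_card_lt_of_maps_to hcard hmaps
      have main : ∀ i j : Fin r, i < j → k i = k j → dist q (b (assign q)) ≤ D := by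
        intro i j hlt hkij
        have hdij : dist (b j) (b i) ≤ D := by
          have h0 : dist (b j) (b i) ≤ Metric.diam (↑(P (k i)) : Set α) :=
            Metric.dist_le_diam_of_mem ((P (k i)).finite_toSet.isBounded)
              (hkij ▸ hk j) (hk i)
          exact le_trans h0 (hdiam_le (k i))
        have hne : ({i' : Fin r | i' < j}).Nonempty := ⟨i, hlt⟩
        have hfin : (((fun i' => dist q (b i')) '' {i' : Fin r | i' < j})).Finite :=
          (Set.finite_Iio j).image _
        have hfin' : (((fun i' => dist (b j) (b i')) '' {i' : Fin r | i' < j})).Finite :=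
          (Set.finite_Iio j).image _
        have h1 : sInf ((fun i' => dist (b j) (b i')) '' {i' : Fin r | i' < j}) ≤
            dist (b j) (b i) :=
          csInf_le hfin'.bddBelow ⟨i, hlt, rfl⟩
        have h2 := hgreedy j q hq
        have hmem : sInf ((fun i' => dist q (b i')) '' {i' : Fin r | i' < j}) ∈
            ((fun i' => dist q (b i')) '' {i' : Fin r | i' < j}) :=
          (hne.image _).csInf_mem hfin
        obtain ⟨i', -, hi'⟩ := hmem
        have : dist q (b i') ≤ D := by
          have hi2 : dist q (b i') = sInf ((fun i' => dist q (b i')) '' {i' : Fin r | i' < j}) := hi'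
          rw [hi2]; exact le_trans (le_trans h2 h1) hdij
        exact le_trans (hnear q hq i') this
      rcases lt_or_gt_of_ne hij with h | h
      · exact main i j h hkij
      · exact main j i h hkij.symm
  apply ciSup_le
  intro j
  apply Metric.diam_le_of_forall_dist_le (by linarith)
  intro p hp q hq
  simp only [Finset.coe_filter, Set.mem_setOf_eq] at hp hq
  have h1 : dist p q ≤ dist p (b j) + dist (b j) q := dist_triangle _ _ _
  have h2 : dist p (b j) ≤ D := by rw [← hp.2]; exact key p hp.1
  have h3 : dist (b j) q ≤ D := by rw [dist_comm, ← hq.2]; exact key q hq.1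
  linarith
end

section
/- In the NP-hardness reduction graph for the minimum sum of squares problem, every path from v₁ to v_{n+1} chooses for each i ∈ {1,...,n} exactly one index j(i) ∈ {1,...,k}, and its cost vector w(p) ∈ ℝ^k satisfies w_j(p) = Σ_{i : j(i) = j} a_i. Consequently, the minimum over all paths of Σ_{j=1}^k w_j(p)² equals the minimum over all functions g : {1,...,n} → {1,...,k} of Σ_{j=1}^k (Σ_{i : g(i)=j} a_i)². -/
/-- Source of the parallel edge `(i, j)` in the layered reduction graph. -/
def redSrc {n k : ℕ} (e : Fin n × Fin k) : Fin (n + 1) := e.1.castSucc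

/-- Target of the parallel edge `(i, j)` in the layered reduction graph. -/
def redTgt {n k : ℕ} (e : Fin n × Fin k) : Fin (n + 1) := e.1.succ

/-- Edge paths in the layered reduction multigraph. -/
def IsEdgePath {n k : ℕ} : Fin (n + 1) → Fin (n + 1) → List (Fin n × Fin k) → Prop
  | s, t, [] => s = t
  | s, t, e :: es => s = redSrc e ∧ IsEdgePath (redTgt e) t es

/-- Cost vector in `ℝ^k` of an edge path: edge `(i, j)` costs `a i` in
coordinate `j` and `0` elsewhere. -/
def redCost {n k : ℕ} (a : Fin n → ℝ) : List (Fin n × Fin k) → (Fin k → ℝ)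
  | [] => 0
  | e :: es => Pi.single e.2 (a e.1) + redCost a es

lemma path_vals {n k : ℕ} : ∀ (p : List (Fin n × Fin k)) (s : Fin (n+1)),
    IsEdgePath s (Fin.last n) p → (p.map fun e => (e.1 : ℕ)) = List.range' s.val (n - s.val) := by
  intro p
  induction p with
  | nil =>
    intro s h
    have : s = Fin.last n := h
    subst this
    simp [Fin.last]
  | cons e es ih =>
    intro s h
    obtain ⟨hs, ht⟩ := h
    have h1 : (s : ℕ) = e.1 := by rw [hs]; rfl
    have h2 := ih (redTgt e) ht
    have hlt : (e.1 : ℕ) < n := e.1.isLt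
    have hn : n - s.val = (n - (s.val + 1)) + 1 := by omega
    rw [List.map_cons, hn, List.range'_succ, h2]
    simp [redTgt, h1]

lemma ofFn_path {n k : ℕ} (g : Fin n → Fin k) :
    ∀ (m j : ℕ) (h : j + m = n),
      IsEdgePath (⟨j, by omega⟩ : Fin (n+1)) (Fin.last n)
        ((List.ofFn (fun i : Fin n => ((i, g i) : Fin n × Fin k))).drop j) := by
  intro m
  induction m with
  | zero =>
    intro j h
    rw [List.drop_eq_nil_of_le (by simp; omega)]
    show _ = _
    simp [Fin.last]; omega
  | succ m ih =>
    intro j h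
    have hj : j < n := by omega
    have hd : (List.ofFn (fun i : Fin n => ((i, g i) : Fin n × Fin k))).drop j =
        (⟨j, hj⟩, g ⟨j, hj⟩) :: (List.ofFn (fun i : Fin n => ((i, g i) : Fin n × Fin k))).drop (j+1) := by
      rw [List.drop_eq_getElem_cons (by simpa using hj)]
      simp
    rw [hd]
    refine ⟨rfl, ?_⟩
    have := ih (j+1) (by omega)
    exact this


lemma redCost_eq {n k : ℕ} (a : Fin n → ℝ) (p : List (Fin n × Fin k)) :
    redCost a p = (p.map fun e => Pi.single e.2 (a e.1)).sum := by
  induction p with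
  | nil => rfl
  | cons e es ih => simp [redCost, ih]

lemma redCost_ofFn {n k : ℕ} (a : Fin n → ℝ) (g : Fin n → Fin k) (j : Fin k) :
    redCost a (List.ofFn (fun i : Fin n => ((i, g i) : Fin n × Fin k))) j =
      ∑ i ∈ Finset.univ.filter (fun i => g i = j), a i := by
  rw [redCost_eq, List.map_ofFn, List.sum_ofFn]
  simp only [Function.comp]
  rw [Finset.sum_apply]
  rw [Finset.sum_filter]
  congr 1
  ext i
  rw [Pi.single_apply]
  by_cases h : g i = j <;> simp [h]
  · intro h2; exact absurd h2.symm h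


lemma part1 {n k : ℕ} (a : Fin n → ℝ) (p : List (Fin n × Fin k))
    (hp : IsEdgePath 0 (Fin.last n) p) :
    ∃ g : Fin n → Fin k,
        p = List.ofFn (fun i : Fin n => (i, g i)) ∧
        ∀ j : Fin k, redCost a p j = ∑ i ∈ Finset.univ.filter (fun i => g i = j), a i := by
  have hv := path_vals p 0 hp
  simp only [Fin.val_zero, Nat.sub_zero] at hv
  have hlen : p.length = n := by
    have := congrArg List.length hv
    simpa using this
  set g : Fin n → Fin k := fun i => (p.get ⟨i, by omega⟩).2 with hg
  have hpe : p = List.ofFn (fun i : Fin n => ((i, g i) : Fin n × Fin k)) := by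
    apply List.ext_getElem (by simp [hlen])
    intro i h1 h2
    have hfst : (p[i].1 : ℕ) = i := by
      have : (p.map fun e => (e.1 : ℕ))[i]'(by simpa using h1) =
          (List.range' 0 p.length)[i]'(by simpa [hlen] using h1) := by
        simp_rw [hv, hlen]
      simpa using this
    simp only [List.getElem_ofFn]
    exact Prod.ext (Fin.ext (by simpa using hfst)) rfl
  exact ⟨g, hpe, fun j => by rw [hpe]; exact redCost_ofFn a g j⟩

/-- in the reduction graph for minimum sum of squares, every path
from `v₁` to `v_{n+1}` chooses exactly one parallel-edge index `g i` per layer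
`i`, and its cost vector satisfies `w_j(p) = Σ_{i : g i = j} a_i`; consequently
the minimum over paths of `Σ_j w_j(p)²` equals the minimum over functions
`g : {1..n} → {1..k}` of `Σ_j (Σ_{i : g i = j} a_i)²`. -/
theorem stmt_15 (n k : ℕ) (hk : 1 ≤ k) (a : Fin n → ℝ) (ha : ∀ i, 0 ≤ a i) :
    (∀ p : List (Fin n × Fin k), IsEdgePath 0 (Fin.last n) p →
      ∃ g : Fin n → Fin k,
        p = List.ofFn (fun i : Fin n => (i, g i)) ∧
        ∀ j : Fin k, redCost a p j = ∑ i ∈ Finset.univ.filter (fun i => g i = j), a i) ∧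
    sInf {x : ℝ | ∃ p : List (Fin n × Fin k),
        IsEdgePath 0 (Fin.last n) p ∧ x = ∑ j : Fin k, (redCost a p j) ^ 2} =
      sInf {x : ℝ | ∃ g : Fin n → Fin k,
        x = ∑ j : Fin k, (∑ i ∈ Finset.univ.filter (fun i => g i = j), a i) ^ 2} := by
  refine ⟨fun p hp => part1 a p hp, ?_⟩
  congr 1
  ext x
  constructor
  · rintro ⟨p, hp, rfl⟩
    obtain ⟨g, -, hc⟩ := part1 a p hp
    exact ⟨g, by simp_rw [hc]⟩
  · rintro ⟨g, rfl⟩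
    refine ⟨List.ofFn (fun i : Fin n => (i, g i)), ?_, ?_⟩
    · have := ofFn_path g n 0 (by omega)
      simpa using this
    · simp_rw [redCost_ofFn]
end
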